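/- Equality ∫₀^{4π} (f'(θ))² dθ = (1/4) ∫₀^{4π} f(θ)² dθ for a C¹ function f with f(θ+2π) = -f(θ) holds if and only if f(θ) = a cos(θ/2) + b sin(θ/2) for some constants a, b. -/

import Mathlib

/-!
Expand `f` in a Fourier series on `[0, 4π]`. Antiperiodicity kills the even modes, and the
coefficients of `f'` are those of `f` multiplied by `i n / 2`. By Parseval,
`∫ f'² - ¼ ∫ f² = 4π ∑ (n² - 1) / 4 · |cₙ|²`, a sum of nonnegative terms over odd `n`, which
vanishes iff `cₙ = 0` for `n ≠ ±1`, i.e. iff `f` is a combination of `e^{± iθ/2}`.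
-/

open Real Function MeasureTheory Set intervalIntegral

theorem Continuous.memLp_restrict_Ioc {E : Type*} [NormedAddCommGroup E] {g : ℝ → E}
    (hg : Continuous g) (p : ENNReal) (a b : ℝ) : MemLp g p (volume.restrict (Ioc a b)) := by
  obtain ⟨C, hC⟩ :=
    (isCompact_Icc (a := a) (b := b)).exists_bound_of_continuousOn hg.continuousOn
  have : IsFiniteMeasure (volume.restrict (Ioc a b)) :=
    isFiniteMeasure_restrict.2 measure_Ioc_lt_top.ne
  exact MemLp.of_bound hg.aestronglyMeasurable C
    (ae_restrict_of_forall_mem measurableSet_Ioc fun x hx => hC x (Ioc_subset_Icc_self hx))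

theorem Function.Antiperiodic.intervalIntegral_eq_zero {E : Type*} [NormedAddCommGroup E]
    [NormedSpace ℝ E] {φ : ℝ → E} {c : ℝ} (h : Antiperiodic φ c) (t : ℝ) :
    ∫ x in t..t + 2 * c, φ x = 0 := by
  have hneg : ∫ x in t..t + 2 * c, φ x = -∫ x in t..t + 2 * c, φ x := calc
    _ = ∫ x in t + c..t + c + 2 * c, φ x := h.periodic_two_mul.intervalIntegral_add_eq t (t + c)
    _ = ∫ x in t..t + 2 * c, φ (x + c) := by rw [integral_comp_add_right]; ring_nf
    _ = -∫ x in t..t + 2 * c, φ x := by simp only [h _, intervalIntegral.integral_neg]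
  have htwo : (2 : ℝ) • ∫ x in t..t + 2 * c, φ x = 0 := by
    rw [two_smul]; nth_rw 2 [hneg]; exact add_neg_cancel _
  exact (smul_eq_zero.mp htwo).resolve_left two_ne_zero

theorem fourier_coe_add_half_of_even {T : ℝ} {n : ℤ} (hn : Even n) (x : ℝ) :
    fourier n ((x + T / 2 : ℝ) : AddCircle T) = fourier n (x : AddCircle T) := by
  obtain ⟨m, rfl⟩ := hn
  have hhalf : (m + m) • ((T / 2 : ℝ) : AddCircle T) = 0 := by
    rw [add_zsmul, ← zsmul_add, ← AddCircle.coe_add, add_halves, AddCircle.coe_period,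
      zsmul_zero]
  rw [fourier_apply, fourier_apply, AddCircle.coe_add, zsmul_add, hhalf, add_zero]

theorem re_smul_fourier_one_add_smul_fourier_neg_one {T : ℝ} (c d : ℂ) (x : ℝ) :
    (c • fourier 1 (x : AddCircle T) + d • fourier (-1) (x : AddCircle T)).re
      = (c.re + d.re) * cos (2 * π / T * x) + (d.im - c.im) * sin (2 * π / T * x) := by
  have h1 : 2 * π * Complex.I * ((1 : ℤ) : ℂ) * x / T
      = ((2 * π / T * x : ℝ) : ℂ) * Complex.I := by
    push_cast; ring
  have h2 : 2 * π * Complex.I * ((-1 : ℤ) : ℂ) * x / T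
      = -((2 * π / T * x : ℝ) : ℂ) * Complex.I := by
    push_cast; ring
  rw [fourier_coe_apply, fourier_coe_apply, h1, h2, smul_eq_mul, smul_eq_mul]
  simp only [Complex.add_re, Complex.mul_re, Complex.exp_re, Complex.exp_im, Complex.mul_im,
    Complex.ofReal_re, Complex.ofReal_im, Complex.I_re, Complex.I_im, Complex.neg_re,
    Complex.neg_im]
  simp only [mul_zero, sub_zero, mul_one, add_zero, neg_zero, exp_zero, cos_neg, sin_neg]
  ring

theorem deriv_cos_add_sin (A B ω x : ℝ) :
    deriv (fun x => A * cos (ω * x) + B * sin (ω * x)) x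
      = ω * (A * cos (ω * x + π / 2) + B * sin (ω * x + π / 2)) := by
  have hlin : HasDerivAt (fun x => ω * x) ω x := by simpa using (hasDerivAt_id x).const_mul ω
  rw [((hlin.cos.const_mul A).fun_add (hlin.sin.const_mul B)).deriv, cos_add_pi_div_two,
    sin_add_pi_div_two]
  ring

section FourierOn

variable {a b : ℝ}

theorem fourierCoeffOn_eq_zero_of_antiperiodic (hab : a < b) {E : Type*}
    [NormedAddCommGroup E] [NormedSpace ℂ E] {g : ℝ → E} (hg : Antiperiodic g ((b - a) / 2))
    {n : ℤ} (hn : Even n) : fourierCoeffOn hab g n = 0 := by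
  have hφ : Antiperiodic (fun x : ℝ => fourier (-n) (x : AddCircle (b - a)) • g x)
      ((b - a) / 2) := fun x => by
    simp only [fourier_coe_add_half_of_even hn.neg, hg x, smul_neg]
  have hzero := hφ.intervalIntegral_eq_zero a
  rw [show a + 2 * ((b - a) / 2) = b by ring] at hzero
  rw [fourierCoeffOn_eq_integral, hzero, smul_zero]

theorem fourierCoeffOn_deriv (hab : a < b) {g g' : ℝ → ℂ}
    (hder : ∀ x ∈ uIcc a b, HasDerivAt g (g' x) x) (hg' : IntervalIntegrable g' volume a b)
    (hper : g a = g b) (n : ℤ) :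
    fourierCoeffOn hab g' n = 2 * π * Complex.I * n / (b - a) * fourierCoeffOn hab g n := by
  rcases eq_or_ne n 0 with rfl | hn
  · simp [fourierCoeffOn_eq_integral, integral_eq_sub_of_hasDerivAt hder hg', hper]
  · rw [fourierCoeffOn_of_hasDerivAt hab hn hder hg', hper, sub_self, mul_zero, zero_sub]
    have : (b - a : ℂ) ≠ 0 := by exact_mod_cast (sub_pos.2 hab).ne'
    have : (n : ℂ) ≠ 0 := by exact_mod_cast hn
    field_simp

theorem sq_norm_fourierCoeffOn_deriv (hab : a < b) {g g' : ℝ → ℂ}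
    (hder : ∀ x ∈ uIcc a b, HasDerivAt g (g' x) x) (hg' : IntervalIntegrable g' volume a b)
    (hper : g a = g b) (n : ℤ) :
    ‖fourierCoeffOn hab g' n‖ ^ 2
      = (2 * π / (b - a)) ^ 2 * n ^ 2 * ‖fourierCoeffOn hab g n‖ ^ 2 := by
  have hfactor : (2 * π * Complex.I * n / (b - a) : ℂ)
      = ((2 * π / (b - a) * n : ℝ) : ℂ) * Complex.I := by
    push_cast; ring
  rw [fourierCoeffOn_deriv hab hder hg' hper, hfactor, norm_mul, norm_mul, Complex.norm_I,
    Complex.norm_real, Real.norm_eq_abs, mul_one, mul_pow, sq_abs, mul_pow]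

theorem hasSum_sq_fourierCoeffOn_of_continuous (hab : a < b) {g : ℝ → ℂ} (hg : Continuous g) :
    HasSum (fun n => ‖fourierCoeffOn hab g n‖ ^ 2) ((b - a)⁻¹ * ∫ x in a..b, ‖g x‖ ^ 2) :=
  hasSum_sq_fourierCoeffOn hab (hg.memLp_restrict_Ioc 2 a b)

theorem fourierCoeffOn_eq_zero_of_integral_deriv_sq_eq (hab : a < b) {g g' : ℝ → ℂ}
    (hder : ∀ x, HasDerivAt g (g' x) x) (hg' : Continuous g') (hg : Antiperiodic g ((b - a) / 2))
    (heq : ∫ x in a..b, ‖g' x‖ ^ 2 = (2 * π / (b - a)) ^ 2 * ∫ x in a..b, ‖g x‖ ^ 2) :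
    ∀ n ∉ ({1, -1} : Finset ℤ), fourierCoeffOn hab g n = 0 := by
  set c := fourierCoeffOn hab g
  set ω := 2 * π / (b - a)
  have hnorm := sq_norm_fourierCoeffOn_deriv hab (fun x _ => hder x) (hg'.intervalIntegrable a b)
    (by rw [← hg.periodic_two_mul a, show a + 2 * ((b - a) / 2) = b by ring])
  have hdefect : HasSum (fun n : ℤ => ω ^ 2 * ((n : ℝ) ^ 2 - 1) * ‖c n‖ ^ 2) 0 := by
    have hsum := (hasSum_sq_fourierCoeffOn_of_continuous hab hg').sub
      ((hasSum_sq_fourierCoeffOn_of_continuous hab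
        (continuous_iff_continuousAt.2 fun x => (hder x).continuousAt)).mul_left (ω ^ 2))
    rw [heq, mul_left_comm, sub_self] at hsum
    rwa [show (fun n : ℤ => ω ^ 2 * ((n : ℝ) ^ 2 - 1) * ‖c n‖ ^ 2)
      = fun n => ‖fourierCoeffOn hab g' n‖ ^ 2 - ω ^ 2 * ‖c n‖ ^ 2 from funext fun n => by
        rw [hnorm]; ring]
  -- Antiperiodicity kills the even modes, in particular the constant one.
  have hnonneg (n : ℤ) : 0 ≤ ω ^ 2 * ((n : ℝ) ^ 2 - 1) * ‖c n‖ ^ 2 := by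
    rcases Int.even_or_odd n with he | ho
    · simp [c, fourierCoeffOn_eq_zero_of_antiperiodic hab hg he]
    · have hn : n ≠ 0 := by rintro rfl; simp at ho
      have : (1 : ℝ) ≤ (n : ℝ) ^ 2 := by
        exact_mod_cast (one_le_sq_iff_one_le_abs _).2 (Int.one_le_abs hn)
      have := sub_nonneg.2 this
      positivity
  intro n hn
  have hω : ω ≠ 0 := div_ne_zero (by positivity) (sub_pos.2 hab).ne'
  have hzero := congrFun ((hasSum_zero_iff_of_nonneg hnonneg).1 hdefect) n
  simp only [Pi.zero_apply, mul_eq_zero, pow_eq_zero_iff two_ne_zero, hω, false_or,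
    sub_eq_zero, norm_eq_zero] at hzero
  refine hzero.resolve_left fun hsq => hn ?_
  have : n ^ 2 = 1 := by exact_mod_cast hsq
  simpa using sq_eq_one_iff.1 this

theorem eq_sum_fourier_of_fourierCoeffOn_eq_zero (hab : a < b) {g : ℝ → ℂ} (hg : Continuous g)
    (hper : Periodic g (b - a)) {s : Finset ℤ} (hs : ∀ n ∉ s, fourierCoeffOn hab g n = 0)
    (x : ℝ) : g x = ∑ n ∈ s, fourierCoeffOn hab g n • fourier n (x : AddCircle (b - a)) := by
  have : Fact (0 < b - a) := ⟨sub_pos.2 hab⟩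
  let G : C(AddCircle (b - a), ℂ) := ⟨hper.lift, continuous_coinduced_dom.mpr hg⟩
  have hG (y : ℝ) : G y = g y := hper.lift_coe y
  have hcoeff (n : ℤ) : fourierCoeff G n = fourierCoeffOn hab g n := by
    simp only [fourierCoeff_eq_intervalIntegral G n a, fourierCoeffOn_eq_integral, hG,
      add_sub_cancel]
  have hsupp (n : ℤ) (hn : n ∉ s) :
      fourierCoeff G n • fourier n (x : AddCircle (b - a)) = 0 := by
    rw [hcoeff, hs n hn, zero_smul]
  rw [← hG, (has_pointwise_sum_fourier_series_of_summable
    (summable_of_ne_finset_zero fun n hn => by rw [hcoeff, hs n hn]) x).unique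
    (hasSum_sum_of_ne_finset_zero hsupp)]
  simp only [hcoeff]

theorem exists_eq_cos_add_sin_of_integral_deriv_sq_eq (hab : a < b) {f : ℝ → ℝ}
    (hf : ContDiff ℝ 1 f) (hanti : Antiperiodic f ((b - a) / 2))
    (heq : ∫ x in a..b, deriv f x ^ 2 = (2 * π / (b - a)) ^ 2 * ∫ x in a..b, f x ^ 2) :
    ∃ A B : ℝ, ∀ x, f x = A * cos (2 * π / (b - a) * x) + B * sin (2 * π / (b - a) * x) := by
  set F : ℝ → ℂ := fun x => (f x : ℂ)
  have hF : Antiperiodic F ((b - a) / 2) := fun x => by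
    simp only [F, hanti x, Complex.ofReal_neg]
  have hder (x : ℝ) : HasDerivAt F ((deriv f x : ℝ) : ℂ) x :=
    ((hf.differentiable one_ne_zero) x).hasDerivAt.ofReal_comp
  have hnorm (u : ℝ → ℝ) : ∫ x in a..b, ‖(u x : ℂ)‖ ^ 2 = ∫ x in a..b, u x ^ 2 := by
    simp [Complex.norm_real, sq_abs]
  have hcoeff := fourierCoeffOn_eq_zero_of_integral_deriv_sq_eq hab hder
    (Complex.continuous_ofReal.comp (hf.continuous_deriv le_rfl)) hF (by rw [hnorm, hnorm, heq])
  set c := fourierCoeffOn hab F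
  refine ⟨(c 1).re + (c (-1)).re, (c (-1)).im - (c 1).im, fun x => ?_⟩
  have hper : Periodic F (b - a) := mul_div_cancel₀ (b - a) two_ne_zero ▸ hF.periodic_two_mul
  have hx := congrArg Complex.re (eq_sum_fourier_of_fourierCoeffOn_eq_zero hab
    (Complex.continuous_ofReal.comp hf.continuous) hper hcoeff x)
  rwa [Finset.sum_pair (by norm_num), re_smul_fourier_one_add_smul_fourier_neg_one] at hx

theorem integral_deriv_sq_cos_add_sin (A B : ℝ) :
    ∫ x in a..b,
        deriv (fun x => A * cos (2 * π / (b - a) * x) + B * sin (2 * π / (b - a) * x)) x ^ 2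
      = (2 * π / (b - a)) ^ 2 *
          ∫ x in a..b, (A * cos (2 * π / (b - a) * x) + B * sin (2 * π / (b - a) * x)) ^ 2 := by
  rcases eq_or_ne (b - a) 0 with hL | hL
  · simp [sub_eq_zero.1 hL]
  set ω := 2 * π / (b - a)
  set h : ℝ → ℝ := fun x => A * cos (ω * x) + B * sin (ω * x)
  have hper : Periodic (fun x => h x ^ 2) (b - a) := fun x => by
    have : ω * (x + (b - a)) = ω * x + 2 * π := by simp only [ω]; field_simp
    simp only [h, this, cos_add_two_pi, sin_add_two_pi]
  -- The derivative is `h` shifted by a quarter period, rescaled by `ω`.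
  have hshift (x : ℝ) : ω * x + π / 2 = ω * (x + (b - a) / 4) := by
    simp only [ω]; field_simp; ring
  calc ∫ x in a..b, deriv h x ^ 2 = ∫ x in a..b, ω ^ 2 * h (x + (b - a) / 4) ^ 2 :=
        integral_congr fun x _ => by rw [deriv_cos_add_sin, hshift]; ring
    _ = ω ^ 2 * ∫ x in a + (b - a) / 4..a + (b - a) / 4 + (b - a), h x ^ 2 := by
        rw [intervalIntegral.integral_const_mul, integral_comp_add_right (fun x => h x ^ 2)]
        ring_nf
    _ = ω ^ 2 * ∫ x in a..b, h x ^ 2 := by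
        rw [hper.intervalIntegral_add_eq _ a, add_sub_cancel]

theorem integral_deriv_sq_eq_iff_exists_cos_add_sin (hab : a < b) {f : ℝ → ℝ}
    (hf : ContDiff ℝ 1 f) (hanti : Antiperiodic f ((b - a) / 2)) :
    ∫ x in a..b, deriv f x ^ 2 = (2 * π / (b - a)) ^ 2 * ∫ x in a..b, f x ^ 2 ↔
      ∃ A B : ℝ, ∀ x, f x = A * cos (2 * π / (b - a) * x) + B * sin (2 * π / (b - a) * x) := by
  refine ⟨exists_eq_cos_add_sin_of_integral_deriv_sq_eq hab hf hanti, fun ⟨A, B, hAB⟩ => ?_⟩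
  obtain rfl := funext hAB
  exact integral_deriv_sq_cos_add_sin A B

end FourierOn

/-- Equality case in the anti-periodic Wirtinger inequality:
for `f` C¹ with `f (θ + 2π) = -f θ`, equality
`∫₀^{4π} f'² = (1/4) ∫₀^{4π} f²` holds iff `f θ = a cos(θ/2) + b sin(θ/2)`. -/
theorem antiperiodic_wirtinger_equality (f : ℝ → ℝ) (hf : ContDiff ℝ 1 f)
    (hanti : ∀ θ : ℝ, f (θ + 2 * π) = - f θ) :
    (∫ θ in (0:ℝ)..(4 * π), (deriv f θ) ^ 2) = (1 / 4) * ∫ θ in (0:ℝ)..(4 * π), (f θ) ^ 2 ↔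
      ∃ a b : ℝ, ∀ θ : ℝ, f θ = a * Real.cos (θ / 2) + b * Real.sin (θ / 2) := by
  have hfreq : 2 * π / (4 * π - 0) = 1 / 2 := by field_simp; ring
  have hanti' : Antiperiodic f ((4 * π - 0) / 2) := by
    rwa [show (4 * π - 0) / 2 = 2 * π by ring]
  have key :=
    integral_deriv_sq_eq_iff_exists_cos_add_sin (by positivity : (0 : ℝ) < 4 * π) hf hanti'
  simpa only [hfreq, one_div_mul_eq_div, div_pow, one_pow, show (2 : ℝ) ^ 2 = 4 by norm_num]
    using key
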